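/- arXiv:2009.00650 — 4 statements merged into one kernel-verified Lean document; each statement's English description precedes it below -/
import Mathlib

section
/- For n ≥ 1, the joint generating function of spread and block over partitions of [n] avoiding the pattern 13/2 equals (q+t)^{n-1} t; consequently the generating function for the dimension index over this avoidance class equals 2^{n-1} q^n. -/
open scoped Classical
noncomputable section

/-- A set partition of `[n]` is modeled as a setoid (equivalence relation) on `Fin n`. -/
abbrev SetPartition (n : ℕ) := Setoid (Fin n)

/-- Pattern containment for set partitions: `P` contains `Q` if there is a strictly
increasing map along which the block structure of `Q` is induced by that of `P`. -/
def SPContains {n k : ℕ} (P : SetPartition n) (Q : SetPartition k) : Prop :=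
  ∃ f : Fin k → Fin n, StrictMono f ∧ ∀ a b : Fin k, Q.r a b ↔ P.r (f a) (f b)

def SPAvoids {n k : ℕ} (P : SetPartition n) (Q : SetPartition k) : Prop :=
  ¬ SPContains P Q

noncomputable instance instFintypeSetoidFin (n : ℕ) : Fintype (SetPartition n) :=
  Fintype.ofInjective (fun P => P.r) fun P Q h => Setoid.ext fun a b => by simp only at h; rw [show P.r = Q.r from h]

/-- The (0-based) minimum of the block containing `i`. -/
def blockMin {n : ℕ} (P : SetPartition n) (i : Fin n) : ℕ :=
  sInf {j : ℕ | ∃ h : j < n, P.r ⟨j, h⟩ i}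

/-- The (0-based) maximum of the block containing `i`. -/
def blockMax {n : ℕ} (P : SetPartition n) (i : Fin n) : ℕ :=
  sSup {j : ℕ | ∃ h : j < n, P.r ⟨j, h⟩ i}

/-- The spread statistic: the sum over blocks of (max − min). -/
def spread {n : ℕ} (P : SetPartition n) : ℕ :=
  ∑ i ∈ Finset.univ.filter (fun i : Fin n => blockMin P i = (i : ℕ)),
    (blockMax P i - (i : ℕ))

/-- The number of blocks. -/
def blockNum {n : ℕ} (P : SetPartition n) : ℕ :=
  (Finset.univ.image (fun i : Fin n => Quotient.mk P i)).card

/-- The restricted growth function of a partition: `rgf P i` is the index (starting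
from 1) of the block of `i` when the blocks are listed in order of their minima. -/
def rgf {n : ℕ} (P : SetPartition n) (i : Fin n) : ℕ :=
  (Finset.univ.filter (fun j : Fin n => blockMin P j = (j : ℕ) ∧ (j : ℕ) ≤ blockMin P i)).card

/-- `w : Fin n → ℕ` is a restricted growth function. -/
def IsRGF {n : ℕ} (w : Fin n → ℕ) : Prop :=
  ∀ i : Fin n, 1 ≤ w i ∧ w i ≤ (Finset.univ.filter (fun j : Fin n => j < i)).sup w + 1

/-- patterns -/
def p123 : SetPartition 3 := Setoid.ker ![0, 0, 0]
def p1_2_3 : SetPartition 3 := Setoid.ker ![0, 1, 2]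
def p13_2 : SetPartition 3 := Setoid.ker ![0, 1, 0]
def p12_3 : SetPartition 3 := Setoid.ker ![0, 0, 1]
def p1_23 : SetPartition 3 := Setoid.ker ![0, 1, 1]
def p13_24 : SetPartition 4 := Setoid.ker ![0, 1, 0, 1]


/-- The joint generating function of spread and block over partitions of `[n]`
avoiding the pattern `Q`. -/
def SB {k : ℕ} (n : ℕ) (Q : SetPartition k) (q t : ℚ) : ℚ :=
  ∑ P ∈ Finset.univ.filter (fun P : SetPartition n => SPAvoids P Q),
    q ^ spread P * t ^ blockNum P

/-- The generating function of the dimension index over partitions of `[n]` avoiding `Q`. -/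
def DimGF {k : ℕ} (n : ℕ) (Q : SetPartition k) (q : ℚ) : ℚ :=
  ∑ P ∈ Finset.univ.filter (fun P : SetPartition n => SPAvoids P Q),
    q ^ (spread P + blockNum P)

/-!
A partition avoids `13/2` exactly when its blocks are intervals, and a partition of `[m + 1]` into
intervals is determined by its set `S ⊆ [m]` of links, the positions `g` such that `g` and `g + 1`
share a block. Intervals covering `[m + 1]` have spread plus number of blocks equal to `m + 1`, and
a position starts a block exactly when it is not `g + 1` for a link `g`; so there are `m + 1 - |S|`
blocks and the spread is `|S|`. Summing `q ^ |S| * t ^ (m + 1 - |S|)` over all `S` gives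
`(q + t) ^ m * t` by the binomial theorem, and `t = q` gives the dimension series.
-/

open Finset

section Blocks

variable {n : ℕ} (P : SetPartition n)

lemma blockMin_mem (i : Fin n) : ∃ h : blockMin P i < n, P.r ⟨blockMin P i, h⟩ i :=
  Nat.sInf_mem (s := {j | ∃ h : j < n, P.r ⟨j, h⟩ i}) ⟨i, i.isLt, P.refl i⟩

lemma blockMax_mem (i : Fin n) : ∃ h : blockMax P i < n, P.r ⟨blockMax P i, h⟩ i :=
  Nat.sSup_mem (s := {j | ∃ h : j < n, P.r ⟨j, h⟩ i}) ⟨i, i.isLt, P.refl i⟩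
    ⟨n, fun _ ⟨h, _⟩ => h.le⟩

lemma blockMin_le {i j : Fin n} (h : P.r j i) : blockMin P i ≤ j :=
  Nat.sInf_le ⟨j.isLt, h⟩

lemma le_blockMax {i j : Fin n} (h : P.r j i) : (j : ℕ) ≤ blockMax P i :=
  le_csSup ⟨n, fun _ ⟨h, _⟩ => h.le⟩ ⟨j.isLt, h⟩

def blockMinFin (i : Fin n) : Fin n := ⟨blockMin P i, (blockMin_mem P i).1⟩

def blockMaxFin (i : Fin n) : Fin n := ⟨blockMax P i, (blockMax_mem P i).1⟩

lemma blockMin_congr {i j : Fin n} (h : P.r i j) : blockMin P i = blockMin P j := by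
  unfold blockMin
  congr 1
  ext k
  exact exists_congr fun _ => ⟨fun hk => P.trans hk h, fun hk => P.trans hk (P.symm h)⟩

lemma rel_iff_blockMin_eq (i j : Fin n) : P.r i j ↔ blockMin P i = blockMin P j := by
  refine ⟨blockMin_congr P, fun h => ?_⟩
  obtain ⟨hi, ri⟩ := blockMin_mem P i
  obtain ⟨hj, rj⟩ := blockMin_mem P j
  simp only [h] at ri
  exact P.trans (P.symm ri) rj

def minima : Finset (Fin n) := univ.filter fun i => blockMin P i = i

lemma blockMinFin_mem_minima (i : Fin n) : blockMinFin P i ∈ minima P := by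
  simpa [minima, blockMinFin] using blockMin_congr P (blockMin_mem P i).2

lemma blockNum_eq_card_minima : blockNum P = #(minima P) := by
  have himage : univ.image (Quotient.mk P) = (minima P).image (Quotient.mk P) := by
    refine Subset.antisymm (fun c hc => ?_) (image_subset_image (subset_univ _))
    obtain ⟨i, -, rfl⟩ := mem_image.mp hc
    exact mem_image.mpr ⟨_, blockMinFin_mem_minima P i, Quotient.sound (blockMin_mem P i).2⟩
  rw [blockNum, himage, card_image_of_injOn]
  intro a ha b hb hab
  simp only [minima, coe_filter, mem_univ, true_and] at ha hb
  exact Fin.ext (ha.symm.trans (((rel_iff_blockMin_eq P a b).mp (Quotient.exact hab)).trans hb))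

end Blocks

def HasIntervalBlocks {n : ℕ} (P : SetPartition n) : Prop :=
  ∀ i, Set.OrdConnected {j | P.r i j}

section IntervalBlocks

variable {n : ℕ} {P : SetPartition n}

lemma HasIntervalBlocks.rel_of_le (hP : HasIntervalBlocks P) {i j k : Fin n}
    (hij : i ≤ j) (hjk : j ≤ k) (hik : P.r i k) : P.r i j :=
  (hP i).out (P.refl i) hik ⟨hij, hjk⟩

lemma p13_2_rel (a b : Fin 3) : p13_2.r a b ↔ (![0, 1, 0] : Fin 3 → ℕ) a = ![0, 1, 0] b :=
  Iff.rfl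

lemma spContains_p13_2_iff :
    SPContains P p13_2 ↔ ∃ i j k : Fin n, i < j ∧ j < k ∧ P.r i k ∧ ¬ P.r i j := by
  constructor
  · rintro ⟨f, hf, hrel⟩
    exact ⟨f 0, f 1, f 2, hf (by decide), hf (by decide), (hrel 0 2).mp rfl,
      fun h => zero_ne_one (α := ℕ) ((hrel 0 1).mpr h)⟩
  · rintro ⟨i, j, k, hij, hjk, hik, hnij⟩
    have hnji : ¬ P.r j i := fun h => hnij (P.symm h)
    have hnjk : ¬ P.r j k := fun h => hnij (P.trans hik (P.symm h))
    have hnkj : ¬ P.r k j := fun h => hnjk (P.symm h)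
    refine ⟨![i, j, k], Fin.strictMono_iff_lt_succ.mpr ?_, fun a b => ?_⟩
    · intro a
      fin_cases a <;> simpa
    · fin_cases a <;> fin_cases b <;>
        simp [p13_2_rel, hik, P.symm hik, hnij, hnji, hnjk, hnkj]

lemma avoids_p13_2_iff : SPAvoids P p13_2 ↔ HasIntervalBlocks P := by
  rw [SPAvoids, spContains_p13_2_iff]
  constructor
  · intro h x
    refine ⟨fun a ha b hb c ⟨hac, hcb⟩ => by_contra fun hc => ?_⟩
    refine h ⟨a, c, b, ?_, ?_, ?_, ?_⟩
    · exact hac.lt_of_ne (by rintro rfl; exact hc ha)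
    · exact hcb.lt_of_ne (by rintro rfl; exact hc hb)
    · exact P.trans (P.symm ha) hb
    · exact fun hac' => hc (P.trans ha hac')
  · rintro hP ⟨i, j, k, hij, hjk, hik, hnij⟩
    exact hnij (hP.rel_of_le hij.le hjk.le hik)

lemma HasIntervalBlocks.rel_iff_mem_Icc (hP : HasIntervalBlocks P) (i j : Fin n) :
    P.r j i ↔ (j : ℕ) ∈ Set.Icc (blockMin P i) (blockMax P i) := by
  refine ⟨fun h => ⟨blockMin_le P h, le_blockMax P h⟩, fun ⟨hmin, hmax⟩ => P.symm ?_⟩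
  have hlo := (blockMin_mem P i).2
  exact P.trans (P.symm hlo) ((hP _).out (P.refl _) (P.trans hlo (P.symm (blockMax_mem P i).2))
    ⟨hmin, hmax⟩)

lemma HasIntervalBlocks.spread_add_card_minima (hP : HasIntervalBlocks P) :
    spread P + #(minima P) = n := by
  have hfiber : ∀ b ∈ minima P, #{j | blockMinFin P j = b} = blockMax P b - b + 1 := by
    intro b hb
    have hb' : blockMin P b = b := (mem_filter.mp hb).2
    have hle : (b : ℕ) ≤ blockMax P b := le_blockMax P (P.refl b)
    have hblock : ({j | blockMinFin P j = b} : Finset (Fin n)) = Icc b (blockMaxFin P b) := by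
      ext j
      simp only [mem_filter, mem_univ, true_and, mem_Icc, Fin.ext_iff, blockMinFin, Fin.le_def,
        blockMaxFin]
      rw [← hb', ← rel_iff_blockMin_eq, hP.rel_iff_mem_Icc, hb', Set.mem_Icc]
    rw [hblock, Fin.card_Icc]
    simp only [blockMaxFin]
    omega
  calc spread P + #(minima P) = ∑ b ∈ minima P, #{j | blockMinFin P j = b} := by
        rw [sum_congr rfl hfiber, sum_add_distrib, card_eq_sum_ones]; rfl
    _ = n := by
        rw [← card_eq_sum_card_fiberwise fun j _ => blockMinFin_mem_minima P j, card_univ,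
          Fintype.card_fin]

end IntervalBlocks

section Links

variable {m : ℕ}

def links (P : SetPartition (m + 1)) : Finset (Fin m) :=
  univ.filter fun g => P.r g.castSucc g.succ

lemma HasIntervalBlocks.map_succ_links {P : SetPartition (m + 1)} (hP : HasIntervalBlocks P) :
    (links P).map (Fin.succEmb m) = (minima P)ᶜ := by
  ext j
  have hmin := blockMin_le P (P.refl j)
  cases j using Fin.cases with
  | zero => simpa [minima] using hmin
  | succ g =>
    have hmax := le_blockMax P (P.refl g.succ)
    simp only [Fin.val_succ] at hmin hmax
    simp only [mem_map, Fin.coe_succEmb, Fin.succ_inj, exists_eq_right, links, minima, mem_compl,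
      mem_filter, mem_univ, true_and, hP.rel_iff_mem_Icc, Set.mem_Icc, Fin.val_castSucc,
      Fin.val_succ]
    omega

lemma HasIntervalBlocks.card_links_add_card_minima {P : SetPartition (m + 1)}
    (hP : HasIntervalBlocks P) : #(links P) + #(minima P) = m + 1 := by
  rw [← card_map (Fin.succEmb m), hP.map_succ_links, card_compl_add_card, Fintype.card_fin]

lemma HasIntervalBlocks.spread_eq_card_links {P : SetPartition (m + 1)}
    (hP : HasIntervalBlocks P) : spread P = #(links P) := by
  have := hP.spread_add_card_minima
  have := hP.card_links_add_card_minima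
  omega

lemma HasIntervalBlocks.blockNum_eq {P : SetPartition (m + 1)} (hP : HasIntervalBlocks P) :
    blockNum P = m - #(links P) + 1 := by
  have := hP.card_links_add_card_minima
  have := (links P).card_le_univ.trans_eq (Fintype.card_fin m)
  rw [blockNum_eq_card_minima]
  omega

lemma rel_of_forall_mem_links (P : SetPartition (m + 1)) {i j : Fin (m + 1)} (hij : i ≤ j)
    (h : ∀ g : Fin m, (i : ℕ) ≤ g → (g : ℕ) < j → g ∈ links P) : P.r i j := by
  induction j using Fin.induction with
  | zero => exact Fin.le_zero_iff.mp hij ▸ P.refl i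
  | succ g ih =>
    rcases hij.eq_or_lt with rfl | hlt
    · exact P.refl _
    have hig : (i : ℕ) ≤ g := by simpa [Fin.lt_def] using hlt
    refine P.trans (ih (Fin.le_def.mpr hig) fun g' h1 h2 => h g' h1 (by simp at h2 ⊢; omega)) ?_
    simpa [links] using h g hig (by simp)

lemma HasIntervalBlocks.rel_iff_forall_mem_links {P : SetPartition (m + 1)}
    (hP : HasIntervalBlocks P) {i j : Fin (m + 1)} (hij : i ≤ j) :
    P.r i j ↔ ∀ g : Fin m, (i : ℕ) ≤ g → (g : ℕ) < j → g ∈ links P := by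
  refine ⟨fun h g h1 h2 => ?_, rel_of_forall_mem_links P hij⟩
  have hgj : P.r g.castSucc j :=
    P.trans (P.symm (hP.rel_of_le (Fin.le_def.mpr h1) (Fin.le_def.mpr h2.le) h)) h
  simpa [links] using hP.rel_of_le Fin.castSucc_lt_succ.le (Fin.castSucc_lt_iff_succ_le.mp h2) hgj

def ofLinks (S : Finset (Fin m)) : SetPartition (m + 1) where
  r i j := ∀ g : Fin m, min (i : ℕ) j ≤ g → (g : ℕ) < max (i : ℕ) j → g ∈ S
  iseqv :=
    { refl := fun _ _ h1 h2 => absurd h2 (by omega)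
      symm := fun h g h1 h2 => h g (by omega) (by omega)
      trans := fun {i j k} hij hjk g h1 h2 => by
        by_cases hg : min (i : ℕ) j ≤ g ∧ (g : ℕ) < max (i : ℕ) j
        · exact hij g hg.1 hg.2
        · exact hjk g (by omega) (by omega) }

lemma ofLinks_hasIntervalBlocks (S : Finset (Fin m)) : HasIntervalBlocks (ofLinks S) := by
  refine fun x => ⟨fun a ha b hb c ⟨hac, hcb⟩ => (ofLinks S).trans ha fun g h1 h2 => ?_⟩
  rw [Fin.le_def] at hac hcb
  exact (ofLinks S).trans ((ofLinks S).symm ha) hb g (by omega) (by omega)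

lemma links_ofLinks (S : Finset (Fin m)) : links (ofLinks S) = S := by
  ext g
  simp only [links, mem_filter, mem_univ, true_and]
  refine ⟨fun h => h g (by simp) (by simp), fun hg g' h1 h2 => ?_⟩
  simp only [Fin.val_castSucc, Fin.val_succ] at h1 h2
  obtain rfl : g' = g := Fin.ext (by omega)
  exact hg

lemma HasIntervalBlocks.ofLinks_links {P : SetPartition (m + 1)} (hP : HasIntervalBlocks P) :
    ofLinks (links P) = P := by
  have key : ∀ i j, i ≤ j → ((ofLinks (links P)).r i j ↔ P.r i j) := fun i j hij => by
    rw [hP.rel_iff_forall_mem_links hij, Fin.le_def] at *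
    exact forall_congr' fun g => by rw [min_eq_left hij, max_eq_right hij]
  refine Setoid.ext fun i j => ?_
  rcases le_total i j with hij | hji
  · exact key i j hij
  · rw [Setoid.comm', Setoid.comm' P]
    exact key j i hji

lemma filter_hasIntervalBlocks_eq_image :
    univ.filter (HasIntervalBlocks (n := m + 1)) = univ.image ofLinks := by
  ext P
  simp only [mem_filter, mem_univ, true_and, mem_image]
  refine ⟨fun hP => ⟨links P, hP.ofLinks_links⟩, ?_⟩
  rintro ⟨S, rfl⟩
  exact ofLinks_hasIntervalBlocks S

lemma sum_avoids_p13_2 {R : Type*} [AddCommMonoid R] (f : SetPartition (m + 1) → R) :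
    ∑ P ∈ univ.filter (SPAvoids · p13_2), f P = ∑ S : Finset (Fin m), f (ofLinks S) := by
  rw [filter_congr fun P _ => avoids_p13_2_iff, filter_hasIntervalBlocks_eq_image,
    sum_image fun S _ T _ h => by rw [← links_ofLinks S, h, links_ofLinks]]

end Links

lemma SB_p13_2 (m : ℕ) (q t : ℚ) : SB (m + 1) p13_2 q t = (q + t) ^ m * t := by
  rw [SB, sum_avoids_p13_2, ← Fin.sum_pow_mul_eq_add_pow, sum_mul]
  refine sum_congr rfl fun S _ => ?_
  have hS := ofLinks_hasIntervalBlocks S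
  rw [hS.spread_eq_card_links, hS.blockNum_eq, links_ofLinks, pow_succ, mul_assoc]

lemma DimGF_eq_SB {k : ℕ} (n : ℕ) (Q : SetPartition k) (q : ℚ) :
    DimGF n Q q = SB n Q q q := by
  simp only [DimGF, SB, pow_add]

/-- over `Π_n(13/2)`, the joint (spread, block) generating function is
`(q+t)^{n-1} t`, and the dimension generating function is `2^{n-1} q^n`. -/
theorem SB_Dim_13_2 (n : ℕ) (hn : 1 ≤ n) (q t : ℚ) :
    SB n p13_2 q t = (q + t) ^ (n - 1) * t ∧
    DimGF n p13_2 q = 2 ^ (n - 1) * q ^ n := by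
  obtain ⟨m, rfl⟩ := Nat.exists_eq_add_of_le' hn
  refine ⟨SB_p13_2 m q t, ?_⟩
  rw [DimGF_eq_SB, SB_p13_2, Nat.add_sub_cancel]
  ring

end
end

section
/- The maximum value of the spread statistic over partitions of [n] avoiding the pattern 123 is ⌊n/2⌋·⌈n/2⌉, and any partition achieving this maximum has exactly ⌈n/2⌉ blocks. -/
open scoped Classical
noncomputable section

/-!
For any partition `P` of `[n]`, let `m` be the number of its blocks with at least two elements.
Their minima are `m` distinct points of `[0, n)` and their maxima `m` further distinct points, so
`2m ≤ n`, and the spread is at most (sum of the `m` largest points) − (sum of the `m` smallest)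
`= m(n - m) ≤ ⌊n/2⌋⌈n/2⌉`, with equality only for `m = ⌊n/2⌋`. If `P` avoids `123`, every point
that is not a block minimum is the maximum of a two-element block, so `P` has `n - m` blocks.
The nested partition `{0, n-1} / {1, n-2} / ⋯` attains the bound.
-/

lemma Finset.sum_range_sub_two_mul (n m : ℕ) :
    ∑ k ∈ Finset.range m, ((n : ℤ) - 1 - 2 * k) = m * (n - m) := by
  induction m with
  | zero => simp
  | succ m ih => rw [Finset.sum_range_succ, ih]; push_cast; ring

/-- Distinct naturals are smallest when they are `0, 1, …, #s - 1` and largest below `n` when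
they are `n - 1, …, n - #s`. -/
lemma Finset.sum_sub_sum_le_of_injOn {ι : Type*} {s : Finset ι} {f g : ι → ℕ} {n : ℕ}
    (hf : Set.InjOn f s) (hg : Set.InjOn g s) (hgn : ∀ i ∈ s, g i < n) :
    ∑ i ∈ s, (g i : ℤ) - ∑ i ∈ s, (f i : ℤ) ≤ s.card * (n - s.card) := by
  have hf' : Set.InjOn (fun i => (f i : ℤ)) s := fun i hi j hj h => hf hi hj (Nat.cast_injective h)
  have hg' : Set.InjOn (fun i => (g i : ℤ)) s := fun i hi j hj h => hg hi hj (Nat.cast_injective h)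
  have hlow := Finset.sum_range_le_sum (s := s.image fun i => (f i : ℤ)) (c := 0) (by simp)
  have hhigh := Finset.sum_le_sum_range (s := s.image fun i => (g i : ℤ)) (c := n - 1) (by
    simp only [Finset.mem_image]
    rintro _ ⟨i, hi, rfl⟩
    have := hgn i hi
    omega)
  rw [Finset.card_image_of_injOn hf', Finset.sum_image hf'] at hlow
  rw [Finset.card_image_of_injOn hg', Finset.sum_image hg'] at hhigh
  rw [← Finset.sum_range_sub_two_mul]
  have hsplit : ∑ k ∈ Finset.range s.card, ((n : ℤ) - 1 - 2 * k)
      = ∑ k ∈ Finset.range s.card, ((n : ℤ) - 1 - k)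
        - ∑ k ∈ Finset.range s.card, (0 + (k : ℤ)) := by
    rw [← Finset.sum_sub_distrib]
    exact Finset.sum_congr rfl fun _ _ => by ring
  linarith

namespace SetPartition

variable {n : ℕ} (P : SetPartition n)

lemma nonempty_block (i : Fin n) : {j : ℕ | ∃ h : j < n, P.r ⟨j, h⟩ i}.Nonempty :=
  ⟨i, i.2, P.refl' i⟩

lemma bddAbove_block (i : Fin n) : BddAbove {j : ℕ | ∃ h : j < n, P.r ⟨j, h⟩ i} :=
  ⟨n, fun _ hj => hj.1.le⟩

lemma blockMin_le_of_rel {i j : Fin n} (h : P.r j i) : blockMin P i ≤ j :=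
  Nat.sInf_le ⟨j.2, h⟩

lemma le_blockMax_of_rel {i j : Fin n} (h : P.r j i) : (j : ℕ) ≤ blockMax P i :=
  le_csSup (bddAbove_block P i) ⟨j.2, h⟩

lemma blockMin_le_self (i : Fin n) : blockMin P i ≤ i :=
  blockMin_le_of_rel P (P.refl' i)

lemma self_le_blockMax (i : Fin n) : (i : ℕ) ≤ blockMax P i :=
  le_blockMax_of_rel P (P.refl' i)

lemma exists_rel_blockMin (i : Fin n) : ∃ h : blockMin P i < n, P.r ⟨blockMin P i, h⟩ i :=
  Nat.sInf_mem (nonempty_block P i)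

lemma exists_rel_blockMax (i : Fin n) : ∃ h : blockMax P i < n, P.r ⟨blockMax P i, h⟩ i :=
  Nat.sSup_mem (nonempty_block P i) (bddAbove_block P i)

lemma blockMin_eq {i : Fin n} {k : ℕ} (hk : k < n) (hrel : P.r ⟨k, hk⟩ i)
    (hle : ∀ j, P.r j i → k ≤ j) : blockMin P i = k :=
  le_antisymm (blockMin_le_of_rel P hrel)
    (le_csInf (nonempty_block P i) fun j ⟨hj, hr⟩ => hle ⟨j, hj⟩ hr)

lemma blockMax_eq {i : Fin n} {k : ℕ} (hk : k < n) (hrel : P.r ⟨k, hk⟩ i)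
    (hle : ∀ j, P.r j i → (j : ℕ) ≤ k) : blockMax P i = k :=
  le_antisymm (csSup_le (nonempty_block P i) fun j ⟨hj, hr⟩ => hle ⟨j, hj⟩ hr)
    (le_blockMax_of_rel P hrel)

lemma blockMin_congr {i j : Fin n} (h : P.r i j) : blockMin P i = blockMin P j :=
  congrArg sInf <| Set.ext fun _ => exists_congr fun _ =>
    ⟨fun hk => P.trans' hk h, fun hk => P.trans' hk (P.symm' h)⟩

lemma blockMax_congr {i j : Fin n} (h : P.r i j) : blockMax P i = blockMax P j :=
  congrArg sSup <| Set.ext fun _ => exists_congr fun _ =>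
    ⟨fun hk => P.trans' hk h, fun hk => P.trans' hk (P.symm' h)⟩

def blockMaxFin (i : Fin n) : Fin n := ⟨blockMax P i, (exists_rel_blockMax P i).1⟩

lemma blockMaxFin_rel (i : Fin n) : P.r (blockMaxFin P i) i := (exists_rel_blockMax P i).2

def blockMins : Finset (Fin n) := Finset.univ.filter fun i => blockMin P i = i

def openers : Finset (Fin n) := (blockMins P).filter fun i => (i : ℕ) < blockMax P i

variable {P}

lemma mem_blockMins {i : Fin n} : i ∈ blockMins P ↔ blockMin P i = i := by
  simp [blockMins]

lemma mem_openers {i : Fin n} : i ∈ openers P ↔ blockMin P i = i ∧ (i : ℕ) < blockMax P i := by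
  simp [openers, mem_blockMins]

lemma eq_of_rel_of_mem_blockMins {i j : Fin n} (hi : i ∈ blockMins P) (hj : j ∈ blockMins P)
    (h : P.r i j) : i = j := by
  rw [mem_blockMins] at hi hj
  exact Fin.ext (by rw [← hi, ← hj, blockMin_congr P h])

lemma blockMaxFin_injOn_openers : Set.InjOn (blockMaxFin P) (openers P) := fun i hi j hj h =>
  eq_of_rel_of_mem_blockMins (Finset.mem_filter.1 hi).1 (Finset.mem_filter.1 hj).1 <|
    P.trans' (P.symm' (blockMaxFin_rel P i)) (h ▸ blockMaxFin_rel P j)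

lemma disjoint_openers_image_blockMaxFin :
    Disjoint (openers P) ((openers P).image (blockMaxFin P)) := by
  refine Finset.disjoint_left.2 fun i hi himg => ?_
  obtain ⟨j, hj, rfl⟩ := Finset.mem_image.1 himg
  have hij : blockMaxFin P j = j :=
    eq_of_rel_of_mem_blockMins (Finset.mem_filter.1 hi).1 (Finset.mem_filter.1 hj).1
      (blockMaxFin_rel P j)
  exact (mem_openers.1 hj).2.ne (congrArg Fin.val hij).symm

lemma two_mul_card_openers_le : 2 * (openers P).card ≤ n := by
  have h := Finset.card_le_univ ((openers P) ∪ (openers P).image (blockMaxFin P))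
  rwa [Finset.card_union_of_disjoint disjoint_openers_image_blockMaxFin,
    Finset.card_image_of_injOn blockMaxFin_injOn_openers, Fintype.card_fin, ← two_mul] at h

lemma spread_eq_sum_openers : spread P = ∑ i ∈ openers P, (blockMax P i - i) :=
  (Finset.sum_filter_of_ne fun _ _ h => Nat.lt_of_sub_ne_zero h).symm

variable (P)

lemma spread_le_card_openers_mul :
    (spread P : ℤ) ≤ (openers P).card * (n - (openers P).card) := by
  have hcast : (spread P : ℤ)
      = ∑ i ∈ openers P, (blockMax P i : ℤ) - ∑ i ∈ openers P, ((i : ℕ) : ℤ) := by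
    rw [spread_eq_sum_openers, Nat.cast_sum, ← Finset.sum_sub_distrib]
    exact Finset.sum_congr rfl fun i _ => Nat.cast_sub (self_le_blockMax P i)
  rw [hcast]
  exact Finset.sum_sub_sum_le_of_injOn Fin.val_injective.injOn
    (fun i hi j hj h => blockMaxFin_injOn_openers hi hj (Fin.ext h)) fun i _ => (blockMaxFin P i).2

/-- With `m` the number of openers, `⌊n/2⌋⌈n/2⌉ - m(n - m) = (⌊n/2⌋ - m)(⌈n/2⌉ - m)`. -/
lemma spread_add_mul_le :
    (spread P : ℤ)
        + (((n / 2 : ℕ) : ℤ) - (openers P).card) * (((n + 1) / 2 : ℕ) - (openers P).card)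
      ≤ ((n / 2 * ((n + 1) / 2) : ℕ) : ℤ) := by
  have hspread := spread_le_card_openers_mul P
  have hn : (n : ℤ) = (n / 2 : ℕ) + ((n + 1) / 2 : ℕ) := by omega
  rw [hn] at hspread
  push_cast at hspread ⊢
  nlinarith

theorem spread_le : spread P ≤ n / 2 * ((n + 1) / 2) := by
  have h := spread_add_mul_le P
  have hm := two_mul_card_openers_le (P := P)
  have hk : (openers P).card ≤ n / 2 := by omega
  have hk' : (openers P).card ≤ (n + 1) / 2 := by omega
  have : (0 : ℤ)
      ≤ (((n / 2 : ℕ) : ℤ) - (openers P).card) * (((n + 1) / 2 : ℕ) - (openers P).card) :=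
    mul_nonneg (by omega) (by omega)
  omega

theorem card_openers_of_spread_eq (h : spread P = n / 2 * ((n + 1) / 2)) :
    (openers P).card = n / 2 := by
  have hle := spread_add_mul_le P
  have hm := two_mul_card_openers_le (P := P)
  rw [h] at hle
  have hk : (openers P).card ≤ n / 2 := by omega
  have hkk' : n / 2 ≤ (n + 1) / 2 := by omega
  by_contra hne
  have : (0 : ℤ)
      < (((n / 2 : ℕ) : ℤ) - (openers P).card) * (((n + 1) / 2 : ℕ) - (openers P).card) :=
    mul_pos (by omega) (by omega)
  omega

variable {P}

lemma contains_p123_of_rel {a b c : Fin n} (hab : a < b) (hbc : b < c) (hrab : P.r a b)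
    (hrbc : P.r b c) : SPContains P p123 := by
  have hrel : ∀ x y : Fin 3, P.r (![a, b, c] x) (![a, b, c] y) := by
    have hrac := P.trans' hrab hrbc
    intro x y
    fin_cases x <;> fin_cases y <;>
      first | exact P.refl' _ | assumption | exact P.symm' ‹_›
  refine ⟨![a, b, c], ?_, fun x y => iff_of_true ?_ (hrel x y)⟩
  · refine Fin.strictMono_iff_lt_succ.2 fun x => ?_
    fin_cases x <;> assumption
  · fin_cases x <;> fin_cases y <;> rfl

lemma eq_blockMin_or_eq_blockMax_of_avoids (hP : SPAvoids P p123) {i j : Fin n} (h : P.r j i) :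
    (j : ℕ) = blockMin P i ∨ (j : ℕ) = blockMax P i := by
  by_contra! hj
  obtain ⟨hmin, hrmin⟩ := exists_rel_blockMin P i
  obtain ⟨hmax, hrmax⟩ := exists_rel_blockMax P i
  refine hP (contains_p123_of_rel (b := j) ?_ ?_ (P.trans' hrmin (P.symm' h))
    (P.trans' h (P.symm' hrmax)))
  · exact Fin.lt_def.2 (lt_of_le_of_ne (blockMin_le_of_rel P h) hj.1.symm)
  · exact Fin.lt_def.2 (lt_of_le_of_ne (le_blockMax_of_rel P h) hj.2)

lemma blockNum_eq_card_blockMins : blockNum P = (blockMins P).card := by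
  have himage : Finset.univ.image (Quotient.mk P) = (blockMins P).image (Quotient.mk P) := by
    refine (Finset.image_subset_image (Finset.subset_univ _)).antisymm' fun q hq => ?_
    obtain ⟨i, -, rfl⟩ := Finset.mem_image.1 hq
    obtain ⟨hlt, hr⟩ := exists_rel_blockMin P i
    exact Finset.mem_image.2 ⟨⟨_, hlt⟩, mem_blockMins.2 (blockMin_congr P hr), Quotient.sound hr⟩
  rw [blockNum, himage, Finset.card_image_of_injOn fun i hi j hj h =>
    eq_of_rel_of_mem_blockMins hi hj (Quotient.exact h)]

lemma compl_blockMins_of_avoids (hP : SPAvoids P p123) :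
    (blockMins P)ᶜ = (openers P).image (blockMaxFin P) := by
  ext i
  rw [Finset.mem_compl, mem_blockMins, Finset.mem_image]
  constructor
  · intro hi
    obtain ⟨hlt, hr⟩ := exists_rel_blockMin P i
    have hmin := blockMin_congr P hr
    have hmax := blockMax_congr P hr
    have hlt' := lt_of_le_of_ne (blockMin_le_self P i) hi
    refine ⟨⟨_, hlt⟩, mem_openers.2 ⟨hmin, ?_⟩, ?_⟩
    · have := self_le_blockMax P i
      simp only [hmax]
      omega
    · refine Fin.ext ((eq_blockMin_or_eq_blockMax_of_avoids hP (P.symm' hr)).resolve_left ?_).symm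
      rw [hmin]
      exact hlt'.ne'
  · rintro ⟨j, hj, rfl⟩
    rw [mem_openers] at hj
    rw [blockMin_congr P (blockMaxFin_rel P j), hj.1]
    exact hj.2.ne

theorem blockNum_add_card_openers_of_avoids (hP : SPAvoids P p123) :
    blockNum P + (openers P).card = n := by
  have h := Finset.card_add_card_compl (blockMins P)
  rwa [compl_blockMins_of_avoids hP, Finset.card_image_of_injOn blockMaxFin_injOn_openers,
    Fintype.card_fin, ← blockNum_eq_card_blockMins] at h

/-- The partition `{0, n-1} / {1, n-2} / ⋯` into nested arcs. -/
def rainbow (n : ℕ) : SetPartition n := Setoid.ker fun i : Fin n => min (i : ℕ) (n - 1 - i)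

lemma rainbow_rel {i j : Fin n} :
    (rainbow n).r i j ↔ min (i : ℕ) (n - 1 - i) = min (j : ℕ) (n - 1 - j) :=
  Iff.rfl

lemma blockMin_rainbow (i : Fin n) : blockMin (rainbow n) i = min (i : ℕ) (n - 1 - i) :=
  blockMin_eq _ (by omega) (by rw [rainbow_rel, Fin.val_mk]; omega) fun j hj => by
    rw [rainbow_rel] at hj
    omega

lemma blockMax_rainbow (i : Fin n) : blockMax (rainbow n) i = max (i : ℕ) (n - 1 - i) :=
  blockMax_eq _ (by omega) (by rw [rainbow_rel, Fin.val_mk]; omega) fun j hj => by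
    rw [rainbow_rel] at hj
    omega

lemma rainbow_avoids_p123 : SPAvoids (rainbow n) p123 := by
  rintro ⟨f, hf, hrel⟩
  have h01 := rainbow_rel.1 ((hrel 0 1).1 rfl)
  have h02 := rainbow_rel.1 ((hrel 0 2).1 rfl)
  have h1 : ((f 0 : Fin n) : ℕ) < f 1 := hf (by decide)
  have h2 : ((f 1 : Fin n) : ℕ) < f 2 := hf (by decide)
  have := (f 2).2
  omega

lemma spread_rainbow : spread (rainbow n) = n / 2 * ((n + 1) / 2) := by
  have hsum : spread (rainbow n) = ∑ i ∈ Finset.range ((n + 1) / 2), (n - 1 - 2 * i) := by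
    have hrange : Finset.range ((n + 1) / 2) = (Finset.range n).filter (2 * · + 1 ≤ n) := by
      ext i
      simp only [Finset.mem_range, Finset.mem_filter]
      omega
    rw [hrange, Finset.sum_filter,
      ← Fin.sum_univ_eq_sum_range (fun i => if 2 * i + 1 ≤ n then n - 1 - 2 * i else 0),
      spread, Finset.sum_filter]
    refine Finset.sum_congr rfl fun i _ => ?_
    rw [blockMin_rainbow, blockMax_rainbow]
    split_ifs <;> omega
  apply Nat.cast_injective (R := ℤ)
  have hterm : ∀ i ∈ Finset.range ((n + 1) / 2), ((n - 1 - 2 * i : ℕ) : ℤ) = n - 1 - 2 * i := by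
    intro i hi
    rw [Finset.mem_range] at hi
    omega
  have hhalf : (n : ℤ) - ((n + 1) / 2 : ℕ) = (n / 2 : ℕ) := by omega
  rw [hsum, Nat.cast_sum, Finset.sum_congr rfl hterm, Finset.sum_range_sub_two_mul, hhalf]
  push_cast
  ring

end SetPartition

/-- the maximum of spread over `Π_n(123)` is `⌊n/2⌋⌈n/2⌉`, and any
partition achieving this maximum has exactly `⌈n/2⌉` blocks. -/
theorem spread_max_123 (n : ℕ) :
    IsGreatest {s : ℕ | ∃ P : SetPartition n, SPAvoids P p123 ∧ spread P = s}
      (n / 2 * ((n + 1) / 2)) ∧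
    ∀ P : SetPartition n, SPAvoids P p123 → spread P = n / 2 * ((n + 1) / 2) →
      blockNum P = (n + 1) / 2 := by
  refine ⟨⟨⟨SetPartition.rainbow n, SetPartition.rainbow_avoids_p123,
    SetPartition.spread_rainbow⟩, ?_⟩, fun P hP hspread => ?_⟩
  · rintro _ ⟨P, -, rfl⟩
    exact P.spread_le
  · have hblocks := SetPartition.blockNum_add_card_openers_of_avoids hP
    have hopeners := P.card_openers_of_spread_eq hspread
    omega

end
end

section
/- For n ≥ 1, the partitions of [n] avoiding both 13/2 and 12/3 are exactly the partitions of the form 1/2/…/(k−1)/{k, k+1, …, n} for 1 ≤ k ≤ n, and consequently SB_n(13/2, 12/3; q,t) = Σ_{k=1}^{n} q^{n-k} t^{k}. -/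
open scoped Classical
noncomputable section

/-- The joint generating function of spread and block over partitions of `[n]`
avoiding both patterns `Q₁` and `Q₂`. -/
def SB2 {k₁ k₂ : ℕ} (n : ℕ) (Q₁ : SetPartition k₁) (Q₂ : SetPartition k₂) (q t : ℚ) : ℚ :=
  ∑ P ∈ Finset.univ.filter
      (fun P : SetPartition n => SPAvoids P Q₁ ∧ SPAvoids P Q₂),
    q ^ spread P * t ^ blockNum P

/-!
Avoiding `13/2` makes blocks convex: if `a ~ c` and `a ≤ b ≤ c` then `b ~ c`. Avoiding `12/3`
puts every element that has a larger block-mate into the block of the last element `n`. So all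
blocks except that of `n` are singletons, and the block of `n`, being convex, is `{k, …, n}`
with `k` its minimum. This partition has `k` blocks and spread `n - k`.
-/

/-- The partition `1/2/…/(k−1)/{k,…,n}`, written 0-based: singletons below `k - 1`, one block from
`k - 1` on. -/
def tailBlockPartition (n k : ℕ) : SetPartition n := Setoid.ker fun i : Fin n => min (i : ℕ) (k - 1)

lemma tailBlockPartition_rel {n k : ℕ} {i j : Fin n} :
    tailBlockPartition n k i j ↔ min (i : ℕ) (k - 1) = min (j : ℕ) (k - 1) :=
  Iff.rfl

lemma strictMono_vecCons_three {n : ℕ} {a b c : Fin n} (hab : a < b) (hbc : b < c) :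
    StrictMono ![a, b, c] := by
  simpa [Fin.strictMono_iff_lt_succ, Fin.forall_fin_two] using ⟨hab, hbc⟩

lemma spContains_13_2 {n : ℕ} {P : SetPartition n} {a b c : Fin n} (hab : a < b) (hbc : b < c)
    (hac : P a c) (hab' : ¬ P a b) : SPContains P p13_2 := by
  have hbc' : ¬ P b c := fun h => hab' (P.trans' hac (P.symm' h))
  refine ⟨![a, b, c], strictMono_vecCons_three hab hbc, fun u v => ?_⟩
  unfold p13_2
  fin_cases u <;> fin_cases v <;> simp [Setoid.ker_def, P.comm', hac, hab', hbc']

lemma spContains_12_3 {n : ℕ} {P : SetPartition n} {a b c : Fin n} (hab : a < b) (hbc : b < c)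
    (hab' : P a b) (hac : ¬ P a c) : SPContains P p12_3 := by
  have hbc' : ¬ P b c := fun h => hac (P.trans' hab' h)
  refine ⟨![a, b, c], strictMono_vecCons_three hab hbc, fun u v => ?_⟩
  unfold p12_3
  fin_cases u <;> fin_cases v <;> simp [Setoid.ker_def, P.comm', hac, hab', hbc']

lemma tailBlockPartition_avoids_13_2 (n k : ℕ) : SPAvoids (tailBlockPartition n k) p13_2 := by
  rintro ⟨f, hf, h⟩
  unfold p13_2 tailBlockPartition at h
  have h01 := h 0 1
  have h02 := h 0 2
  have : f 0 < f 1 := hf (by decide)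
  have : f 1 < f 2 := hf (by decide)
  simp [Setoid.ker_def] at h01 h02
  omega

lemma tailBlockPartition_avoids_12_3 (n k : ℕ) : SPAvoids (tailBlockPartition n k) p12_3 := by
  rintro ⟨f, hf, h⟩
  unfold p12_3 tailBlockPartition at h
  have h01 := h 0 1
  have h02 := h 0 2
  have : f 0 < f 1 := hf (by decide)
  have : f 1 < f 2 := hf (by decide)
  simp [Setoid.ker_def] at h01 h02
  omega

section

variable {n : ℕ} {P : SetPartition n}

lemma rel_of_le_of_le_of_avoids_13_2 (h : SPAvoids P p13_2) {a b c : Fin n} (hab : a ≤ b)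
    (hbc : b ≤ c) (hac : P a c) : P b c := by
  rcases hab.eq_or_lt with rfl | hab
  · exact hac
  rcases hbc.eq_or_lt with rfl | hbc
  · exact P.refl' b
  by_contra hbc'
  exact h (spContains_13_2 hab hbc hac fun hab' => hbc' (P.trans' (P.symm' hab') hac))

lemma rel_of_lt_of_le_of_avoids_12_3 (h : SPAvoids P p12_3) {a b c : Fin n} (hab : a < b)
    (hbc : b ≤ c) (hab' : P a b) : P a c := by
  rcases hbc.eq_or_lt with rfl | hbc
  · exact hab'
  by_contra hac
  exact h (spContains_12_3 hab hbc hab' hac)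

lemma blockMin_le_of_rel {i j : Fin n} (h : P i j) : blockMin P j ≤ i :=
  Nat.sInf_le ⟨i.isLt, h⟩

lemma rel_blockMin (i : Fin n) :
    P ⟨blockMin P i, (blockMin_le_of_rel (P.refl' i)).trans_lt i.isLt⟩ i :=
  (Nat.sInf_mem ⟨(i : ℕ), i.isLt, P.refl' i⟩ : blockMin P i ∈ _).2

lemma exists_eq_tailBlockPartition_of_avoids (hn : 1 ≤ n) (h₁ : SPAvoids P p13_2)
    (h₂ : SPAvoids P p12_3) :
    ∃ k, 1 ≤ k ∧ k ≤ n ∧ P = tailBlockPartition n k := by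
  let last : Fin n := ⟨n - 1, by omega⟩
  have le_last (i : Fin n) : i ≤ last := Nat.le_sub_one_of_lt i.isLt
  set m := blockMin P last
  have hm : m ≤ n - 1 := blockMin_le_of_rel (P.refl' last)
  have rel_last_of_le {i : Fin n} (hi : m ≤ i) : P i last :=
    rel_of_le_of_le_of_avoids_13_2 h₁ hi (le_last i) (rel_blockMin last)
  have le_of_rel {i j : Fin n} (hij : i < j) (h : P i j) : m ≤ i :=
    blockMin_le_of_rel (rel_of_lt_of_le_of_avoids_12_3 h₂ hij (le_last j) h)
  refine ⟨m + 1, by omega, by omega, Setoid.ext fun a b => ?_⟩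
  rw [tailBlockPartition_rel, add_tsub_cancel_right]
  constructor
  · intro hab
    rcases lt_trichotomy a b with hlt | rfl | hgt
    · have := le_of_rel hlt hab
      omega
    · rfl
    · have := le_of_rel hgt (P.symm' hab)
      omega
  · intro hab
    by_cases ha : m ≤ a
    · exact P.trans' (rel_last_of_le ha) (P.symm' (rel_last_of_le (by omega)))
    · rw [Fin.ext (by omega : (a : ℕ) = b)]

end

lemma blockMin_tailBlockPartition {n : ℕ} (k : ℕ) (i : Fin n) :
    blockMin (tailBlockPartition n k) i = min (i : ℕ) (k - 1) := by
  refine IsLeast.csInf_eq ⟨⟨by omega, ?_⟩, fun j ⟨_, hj⟩ => ?_⟩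
  · rw [tailBlockPartition_rel, Fin.val_mk]
    omega
  · rw [tailBlockPartition_rel, Fin.val_mk] at hj
    omega

lemma blockMax_tailBlockPartition {n : ℕ} (k : ℕ) (i : Fin n) :
    blockMax (tailBlockPartition n k) i = if (i : ℕ) < k - 1 then (i : ℕ) else n - 1 := by
  have := i.isLt
  refine IsGreatest.csSup_eq ⟨?_, fun j ⟨_, hj⟩ => ?_⟩
  · split_ifs
    · exact ⟨i.isLt, (tailBlockPartition n k).refl' i⟩
    · refine ⟨by omega, ?_⟩
      rw [tailBlockPartition_rel, Fin.val_mk]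
      omega
  · rw [tailBlockPartition_rel, Fin.val_mk] at hj
    split_ifs <;> omega

lemma spread_tailBlockPartition {n k : ℕ} (hk : 1 ≤ k) (hkn : k ≤ n) :
    spread (tailBlockPartition n k) = n - k := by
  have hmin (i : Fin n) : blockMin (tailBlockPartition n k) i = i ↔ (i : ℕ) ≤ k - 1 := by
    rw [blockMin_tailBlockPartition]
    omega
  rw [spread, Finset.sum_eq_single_of_mem ⟨k - 1, by omega⟩ (by simp [hmin])]
  · rw [blockMax_tailBlockPartition, Fin.val_mk, if_neg (lt_irrefl _)]
    omega
  · intro i hi hne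
    simp only [Finset.mem_filter, Finset.mem_univ, true_and, hmin] at hi
    have : (i : ℕ) < k - 1 := lt_of_le_of_ne hi fun h => hne (Fin.ext h)
    rw [blockMax_tailBlockPartition, if_pos this, Nat.sub_self]

lemma blockNum_ker {n : ℕ} {α : Type*} (f : Fin n → α) :
    blockNum (Setoid.ker f) = (Finset.univ.image f).card := by
  rw [blockNum, ← Finset.card_image_of_injective _ (Setoid.kerLift_injective f), Finset.image_image]
  rfl

lemma blockNum_tailBlockPartition {n k : ℕ} (hk : 1 ≤ k) (hkn : k ≤ n) :
    blockNum (tailBlockPartition n k) = k := by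
  rw [tailBlockPartition, blockNum_ker]
  convert Finset.card_range k using 2
  ext j
  simp only [Finset.mem_image, Finset.mem_univ, true_and, Finset.mem_range]
  constructor
  · rintro ⟨i, rfl⟩
    omega
  · intro hj
    exact ⟨⟨j, by omega⟩, by rw [Fin.val_mk]; omega⟩

lemma injOn_tailBlockPartition (n : ℕ) : Set.InjOn (tailBlockPartition n) (Set.Icc 1 n) :=
  fun k hk k' hk' h => by
    rw [← blockNum_tailBlockPartition hk.1 hk.2, h, blockNum_tailBlockPartition hk'.1 hk'.2]

lemma avoids_13_2_and_12_3_iff {n : ℕ} (hn : 1 ≤ n) (P : SetPartition n) :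
    SPAvoids P p13_2 ∧ SPAvoids P p12_3 ↔ ∃ k, 1 ≤ k ∧ k ≤ n ∧ P = tailBlockPartition n k := by
  refine ⟨fun h => exists_eq_tailBlockPartition_of_avoids hn h.1 h.2, ?_⟩
  rintro ⟨k, -, -, rfl⟩
  exact ⟨tailBlockPartition_avoids_13_2 n k, tailBlockPartition_avoids_12_3 n k⟩

/-- the partitions of `[n]` avoiding both `13/2` and `12/3` are exactly
`1/2/…/(k−1)/{k,…,n}` for `1 ≤ k ≤ n` (here written 0-based: singletons `{0},…,{k-2}`
together with the interval `{k-1,…,n-1}`), and the joint generating function is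
`Σ_{k=1}^{n} q^{n-k} t^k`. -/
theorem avoid_13_2_and_12_3 (n : ℕ) (hn : 1 ≤ n) :
    (∀ P : SetPartition n,
      (SPAvoids P p13_2 ∧ SPAvoids P p12_3) ↔
        ∃ k : ℕ, 1 ≤ k ∧ k ≤ n ∧
          P = Setoid.ker (fun i : Fin n => min (i : ℕ) (k - 1))) ∧
    ∀ q t : ℚ, SB2 n p13_2 p12_3 q t = ∑ k ∈ Finset.Icc 1 n, q ^ (n - k) * t ^ k := by
  refine ⟨avoids_13_2_and_12_3_iff hn, fun q t => ?_⟩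
  have havoiders :
      Finset.univ.filter (fun P : SetPartition n => SPAvoids P p13_2 ∧ SPAvoids P p12_3) =
        (Finset.Icc 1 n).image (tailBlockPartition n) := by
    ext P
    simp [avoids_13_2_and_12_3_iff hn, eq_comm, and_assoc]
  rw [SB2, havoiders, Finset.sum_image (by simpa using injOn_tailBlockPartition n)]
  refine Finset.sum_congr rfl fun k hk => ?_
  rw [Finset.mem_Icc] at hk
  rw [spread_tailBlockPartition hk.1 hk.2, blockNum_tailBlockPartition hk.1 hk.2]

end
end

section
/- Under the composed bijection T between noncrossing partitions of [n] and 321-avoiding permutations of [n] (via ballot pairs), for every noncrossing partition with RGF w: spread(w) = inv(T(w)) and block(w) = LRM(T(w)), where inv counts inversions and LRM counts left-to-right maxima. -/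
open scoped Classical
noncomputable section

/-- A list of naturals is a restricted growth function. -/
def IsRGFL (w : List ℕ) : Prop :=
  ∀ i : ℕ, i < w.length → 1 ≤ w.getD i 0 ∧ w.getD i 0 ≤ (w.take i).foldr max 0 + 1

/-- The largest letter of a word. -/
def maxLetterL (w : List ℕ) : ℕ := w.foldr max 0

/-- The (0-based) index of the first occurrence of the letter `l`. -/
def firstIdxL (w : List ℕ) (l : ℕ) : ℕ := sInf {i : ℕ | i < w.length ∧ w.getD i 0 = l}

/-- The (0-based) index of the last occurrence of the letter `l`. -/
def lastIdxL (w : List ℕ) (l : ℕ) : ℕ := sSup {i : ℕ | i < w.length ∧ w.getD i 0 = l}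

/-- The spread of a word. -/
def spreadL (w : List ℕ) : ℕ :=
  ∑ l ∈ Finset.Icc 1 (maxLetterL w), (lastIdxL w l - firstIdxL w l)

/-- A word avoids the subword pattern `1212`. -/
def Avoids1212L (w : List ℕ) : Prop :=
  ¬ ∃ i j k l : ℕ, i < j ∧ j < k ∧ k < l ∧ l < w.length ∧
      w.getD i 0 = w.getD k 0 ∧ w.getD j 0 = w.getD l 0 ∧ w.getD i 0 ≠ w.getD j 0

/-- The indicator word of first occurrences of letters in `w`. -/
def firstsOf (w : List ℕ) : List Bool :=
  List.ofFn fun i : Fin w.length =>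
    if ∀ j : ℕ, j < (i : ℕ) → w.getD j 0 ≠ w.getD (i : ℕ) 0 then true else false

/-- The indicator word of last occurrences of letters in `w`. -/
def lastsOf (w : List ℕ) : List Bool :=
  List.ofFn fun i : Fin w.length =>
    if ∀ j : ℕ, (i : ℕ) < j → j < w.length → w.getD j 0 ≠ w.getD (i : ℕ) 0 then true
    else false

/-- A ballot pair: two binary words of the same length with equally many 1s, such that
for `1 ≤ i ≤ n-1` the number of 1s among the first `i` letters of `p` strictly exceeds
the number of 1s among the first `i-1` letters of `v`. -/
def IsBallotPair (p v : List Bool) : Prop :=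
  p.length = v.length ∧ p.count true = v.count true ∧
    ∀ i : ℕ, 1 ≤ i → i ≤ p.length - 1 →
      (v.take (i - 1)).count true < (p.take i).count true

/-- `i` is a left-to-right maximum of the permutation `π`. -/
def IsLRM {n : ℕ} (π : Equiv.Perm (Fin n)) (i : Fin n) : Prop :=
  ∀ j : Fin n, j < i → π j < π i

/-- The number of left-to-right maxima of `π`. -/
def lrmStat {n : ℕ} (π : Equiv.Perm (Fin n)) : ℕ :=
  (Finset.univ.filter (fun i : Fin n => IsLRM π i)).card

/-- The number of inversions of `π`. -/
def invStat {n : ℕ} (π : Equiv.Perm (Fin n)) : ℕ :=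
  (Finset.univ.filter (fun p : Fin n × Fin n => p.1 < p.2 ∧ π p.2 < π p.1)).card

/-- The number of fixed points of `π`. -/
def fixStat {n : ℕ} (π : Equiv.Perm (Fin n)) : ℕ :=
  (Finset.univ.filter (fun i : Fin n => π i = i)).card

/-- `π` avoids the pattern `321`: no decreasing subsequence of length 3. -/
def Av321 {n : ℕ} (π : Equiv.Perm (Fin n)) : Prop :=
  ¬ ∃ i j k : Fin n, i < j ∧ j < k ∧ π k < π j ∧ π j < π i

/-- The indicator word of positions of left-to-right maxima of `π`. -/
def posOf {n : ℕ} (π : Equiv.Perm (Fin n)) : List Bool :=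
  List.ofFn fun i : Fin n => if IsLRM π i then true else false

/-- The indicator word of values of left-to-right maxima of `π`. -/
def valOf {n : ℕ} (π : Equiv.Perm (Fin n)) : List Bool :=
  List.ofFn fun i : Fin n => if ∃ j : Fin n, IsLRM π j ∧ π j = i then true else false

/-!
Both statistics are read off the ballot pair. Each letter of an RGF contributes `last − first`
to the spread, and the letters of an RGF are exactly `1, …, max`; so the spread is
`Σ lasts − Σ firsts` and `max` is the number of first occurrences. On the permutation side, a
left-to-right maximum `i` lies above the `i` earlier values, so it starts `π i − i` inversions,
and in a `321`-avoiding permutation no other index starts an inversion; so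
`inv = Σ vals − Σ poss`. Matching positions with firsts and values with lasts gives both
identities.
-/

open Finset

section Words

variable {w : List ℕ}

lemma exists_getD_eq_of_mem {l : ℕ} (hl : l ∈ w) : ∃ i < w.length, w.getD i 0 = l := by
  obtain ⟨i, hi, rfl⟩ := List.mem_iff_getElem.mp hl
  exact ⟨i, hi, List.getD_eq_getElem _ _ hi⟩

lemma getD_mem_toFinset {i : ℕ} (hi : i ∈ range w.length) : w.getD i 0 ∈ w.toFinset := by
  rw [List.getD_eq_getElem _ _ (mem_range.mp hi), List.mem_toFinset]
  exact List.getElem_mem _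

lemma maxLetterL_append_singleton (w : List ℕ) (a : ℕ) :
    maxLetterL (w ++ [a]) = max (maxLetterL w) a := by
  induction w with
  | nil => simp [maxLetterL]
  | cons x xs ih => simp only [maxLetterL, List.cons_append, List.foldr_cons] at ih ⊢; omega

lemma IsRGFL.toFinset_take (h : IsRGFL w) (k : ℕ) :
    (w.take k).toFinset = Icc 1 (maxLetterL (w.take k)) := by
  induction k with
  | zero => simp [maxLetterL]
  | succ k ih =>
    rcases lt_or_ge k w.length with hk | hk
    · obtain ⟨h1, h2⟩ := h k hk
      rw [List.getD_eq_getElem _ _ hk] at h1 h2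
      rw [List.take_add_one, List.getElem?_eq_getElem hk, Option.toList_some,
        List.toFinset_append, ih, maxLetterL_append_singleton]
      ext l
      simp only [mem_union, mem_Icc, List.toFinset_cons, List.toFinset_nil, insert_empty,
        mem_singleton]
      change w[k] ≤ maxLetterL (w.take k) + 1 at h2
      omega
    · rwa [List.take_of_length_le (by omega : w.length ≤ k + 1), ← List.take_of_length_le hk]

lemma IsRGFL.toFinset_eq (h : IsRGFL w) : w.toFinset = Icc 1 (maxLetterL w) := by
  simpa using h.toFinset_take w.length

def firstPositions (w : List ℕ) : Finset ℕ :=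
  (range w.length).filter fun i => ∀ j < i, w.getD j 0 ≠ w.getD i 0

def lastPositions (w : List ℕ) : Finset ℕ :=
  (range w.length).filter fun i => ∀ j, i < j → j < w.length → w.getD j 0 ≠ w.getD i 0

lemma firstIdxL_spec {l : ℕ} (hl : l ∈ w) :
    firstIdxL w l < w.length ∧ w.getD (firstIdxL w l) 0 = l :=
  Nat.sInf_mem (exists_getD_eq_of_mem hl)

lemma bddAbove_occurrences (l : ℕ) : BddAbove {i : ℕ | i < w.length ∧ w.getD i 0 = l} :=
  ⟨w.length, fun _ hi => hi.1.le⟩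

lemma lastIdxL_spec {l : ℕ} (hl : l ∈ w) :
    lastIdxL w l < w.length ∧ w.getD (lastIdxL w l) 0 = l :=
  Nat.sSup_mem (exists_getD_eq_of_mem hl) (bddAbove_occurrences l)

lemma firstIdxL_le_lastIdxL {l : ℕ} (hl : l ∈ w) : firstIdxL w l ≤ lastIdxL w l :=
  Nat.sInf_le (lastIdxL_spec hl)

lemma firstIdxL_mem_firstPositions {l : ℕ} (hl : l ∈ w) :
    firstIdxL w l ∈ firstPositions w := by
  obtain ⟨hlt, hget⟩ := firstIdxL_spec hl
  refine mem_filter.mpr ⟨mem_range.mpr hlt, fun j hj heq => ?_⟩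
  exact hj.not_ge (Nat.sInf_le ⟨hj.trans hlt, heq.trans hget⟩)

lemma lastIdxL_mem_lastPositions {l : ℕ} (hl : l ∈ w) :
    lastIdxL w l ∈ lastPositions w := by
  obtain ⟨hlt, hget⟩ := lastIdxL_spec hl
  refine mem_filter.mpr ⟨mem_range.mpr hlt, fun j hj hjw heq => ?_⟩
  exact hj.not_ge (le_csSup (bddAbove_occurrences l) ⟨hjw, heq.trans hget⟩)

lemma firstIdxL_getD {i : ℕ} (hi : i ∈ firstPositions w) : firstIdxL w (w.getD i 0) = i := by
  obtain ⟨hiw, hfirst⟩ := mem_filter.mp hi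
  refine le_antisymm (Nat.sInf_le ⟨mem_range.mp hiw, rfl⟩)
    (le_csInf ⟨i, mem_range.mp hiw, rfl⟩ ?_)
  exact fun j ⟨_, hj⟩ => not_lt.mp fun hji => hfirst j hji hj

lemma lastIdxL_getD {i : ℕ} (hi : i ∈ lastPositions w) : lastIdxL w (w.getD i 0) = i := by
  obtain ⟨hiw, hlast⟩ := mem_filter.mp hi
  refine le_antisymm (csSup_le ⟨i, mem_range.mp hiw, rfl⟩ ?_)
    (le_csSup (bddAbove_occurrences _) ⟨mem_range.mp hiw, rfl⟩)
  exact fun j ⟨hjw, hj⟩ => not_lt.mp fun hij => hlast j hij hjw hj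

lemma card_toFinset_eq_card_firstPositions :
    w.toFinset.card = (firstPositions w).card :=
  card_nbij' (firstIdxL w) (w.getD · 0)
    (fun _ hl => firstIdxL_mem_firstPositions (List.mem_toFinset.mp hl))
    (fun _ hi => getD_mem_toFinset (mem_filter.mp hi).1)
    (fun _ hl => (firstIdxL_spec (List.mem_toFinset.mp hl)).2)
    (fun _ hi => firstIdxL_getD hi)

lemma sum_firstIdxL_toFinset :
    ∑ l ∈ w.toFinset, firstIdxL w l = ∑ i ∈ firstPositions w, i :=
  sum_nbij' (firstIdxL w) (w.getD · 0)
    (fun _ hl => firstIdxL_mem_firstPositions (List.mem_toFinset.mp hl))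
    (fun _ hi => getD_mem_toFinset (mem_filter.mp hi).1)
    (fun _ hl => (firstIdxL_spec (List.mem_toFinset.mp hl)).2)
    (fun _ hi => firstIdxL_getD hi) (fun _ _ => rfl)

lemma sum_lastIdxL_toFinset :
    ∑ l ∈ w.toFinset, lastIdxL w l = ∑ i ∈ lastPositions w, i :=
  sum_nbij' (lastIdxL w) (w.getD · 0)
    (fun _ hl => lastIdxL_mem_lastPositions (List.mem_toFinset.mp hl))
    (fun _ hi => getD_mem_toFinset (mem_filter.mp hi).1)
    (fun _ hl => (lastIdxL_spec (List.mem_toFinset.mp hl)).2)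
    (fun _ hi => lastIdxL_getD hi) (fun _ _ => rfl)

lemma IsRGFL.maxLetterL_eq_card_firstPositions (h : IsRGFL w) :
    maxLetterL w = (firstPositions w).card := by
  rw [← card_toFinset_eq_card_firstPositions, h.toFinset_eq, Nat.card_Icc, Nat.add_sub_cancel]

lemma IsRGFL.spreadL_add_sum_firstPositions (h : IsRGFL w) :
    spreadL w + ∑ i ∈ firstPositions w, i = ∑ i ∈ lastPositions w, i := by
  rw [spreadL, ← h.toFinset_eq, ← sum_firstIdxL_toFinset, ← sum_lastIdxL_toFinset,
    ← sum_add_distrib]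
  exact sum_congr rfl fun l hl =>
    Nat.sub_add_cancel (firstIdxL_le_lastIdxL (List.mem_toFinset.mp hl))

end Words

section Permutations

variable {n : ℕ} {π : Equiv.Perm (Fin n)}

lemma card_filter_perm_lt (π : Equiv.Perm (Fin n)) (v : Fin n) :
    (univ.filter fun j => π j < v).card = v := by
  have hcomp := Equiv.sum_comp π fun k => if k < v then 1 else 0
  rw [card_filter, hcomp, ← card_filter, filter_gt_eq_Iio, Fin.card_Iio]

lemma IsLRM.card_inversions_add {i : Fin n} (h : IsLRM π i) :
    (univ.filter fun j => i < j ∧ π j < π i).card + i = π i := by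
  have hsplit : ∀ j, (if π j < π i then 1 else 0) =
      (if i < j ∧ π j < π i then 1 else 0) + (if j < i then 1 else 0) := by
    intro j
    rcases lt_trichotomy j i with hji | rfl | hij
    · simp [hji, hji.not_gt, h j hji]
    · simp
    · simp [hij, hij.not_gt]
  have hcard_lt : (univ.filter fun j => j < i).card = i := by
    rw [filter_gt_eq_Iio, Fin.card_Iio]
  rw [← card_filter_perm_lt π (π i), ← hcard_lt, card_filter, card_filter, card_filter,
    ← sum_add_distrib]
  exact (sum_congr rfl fun j _ => hsplit j).symm

lemma Av321.not_lt_of_not_isLRM (hav : Av321 π) {i j : Fin n} (hi : ¬ IsLRM π i) (hij : i < j) :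
    ¬ π j < π i := by
  intro hji
  simp only [IsLRM, not_forall, not_lt] at hi
  obtain ⟨k, hki, hik⟩ := hi
  exact hav ⟨k, i, j, hki, hij, hji, lt_of_le_of_ne hik (π.injective.ne hki.ne')⟩

lemma invStat_eq_sum (π : Equiv.Perm (Fin n)) :
    invStat π = ∑ i, (univ.filter fun j => i < j ∧ π j < π i).card := by
  simp only [invStat, card_filter, Fintype.sum_prod_type]

lemma Av321.invStat_add_sum_lrm (hav : Av321 π) :
    invStat π + ∑ i ∈ univ.filter (IsLRM π), (i : ℕ) =
      ∑ i ∈ univ.filter (IsLRM π), (π i : ℕ) := by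
  rw [invStat_eq_sum, ← sum_filter_add_sum_filter_not univ (IsLRM π),
    sum_eq_zero (s := univ.filter fun i => ¬ IsLRM π i), add_zero, ← sum_add_distrib]
  · exact sum_congr rfl fun i hi => (mem_filter.mp hi).2.card_inversions_add
  · intro i hi
    exact card_eq_zero.mpr <| filter_eq_empty_iff.mpr fun j _ ⟨hij, hji⟩ =>
      hav.not_lt_of_not_isLRM (mem_filter.mp hi).2 hij hji

lemma map_filter_isLRM_toEmbedding (π : Equiv.Perm (Fin n)) :
    (univ.filter (IsLRM π)).map π.toEmbedding =
      univ.filter fun i => ∃ j, IsLRM π j ∧ π j = i := by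
  ext i
  simp only [mem_map_equiv, mem_filter, mem_univ, true_and]
  exact ⟨fun h => ⟨_, h, π.apply_symm_apply i⟩, fun ⟨j, hj, hji⟩ => hji ▸ by simpa⟩

end Permutations

lemma iff_of_ofFn_ite_eq {m : ℕ} {p q : Fin m → Prop} [DecidablePred p] [DecidablePred q]
    (h : (List.ofFn fun i => if p i then true else false) =
      List.ofFn fun i => if q i then true else false) (i : Fin m) : p i ↔ q i := by
  have := congrFun (List.ofFn_injective h) i
  by_cases hp : p i <;> by_cases hq : q i <;> simp_all

lemma map_valEmbedding_filter_eq {m : ℕ} {p : Fin m → Prop} [DecidablePred p] {s : Finset ℕ}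
    (hs : s ⊆ range m) (h : ∀ i : Fin m, p i ↔ (i : ℕ) ∈ s) :
    (univ.filter p).map Fin.valEmbedding = s := by
  ext a
  simp only [mem_map, mem_filter, mem_univ, true_and, Fin.valEmbedding_apply]
  refine ⟨fun ⟨i, hi, hia⟩ => hia ▸ (h i).mp hi, fun ha => ?_⟩
  exact ⟨⟨a, mem_range.mp (hs ha)⟩, (h _).mpr ha, rfl⟩

theorem spread_block_eq_inv_lrm_general (n : ℕ) (w : List ℕ) (hlen : w.length = n)
    (hrgf : IsRGFL w) (π : Equiv.Perm (Fin n)) (hav : Av321 π)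
    (hpos : posOf π = firstsOf w) (hval : valOf π = lastsOf w) :
    spreadL w = invStat π ∧ maxLetterL w = lrmStat π := by
  subst hlen
  have hfirst : (univ.filter (IsLRM π)).map Fin.valEmbedding = firstPositions w :=
    map_valEmbedding_filter_eq (filter_subset _ _) fun i => by
      simp [firstPositions, iff_of_ofFn_ite_eq hpos i]
  have hlast : ((univ.filter (IsLRM π)).map π.toEmbedding).map Fin.valEmbedding =
      lastPositions w := by
    rw [map_filter_isLRM_toEmbedding]
    exact map_valEmbedding_filter_eq (filter_subset _ _) fun i => by
      simp [lastPositions, iff_of_ofFn_ite_eq hval i]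
  constructor
  · have hspread := hrgf.spreadL_add_sum_firstPositions
    rw [← hfirst, ← hlast, sum_map, sum_map, sum_map] at hspread
    simp only [Fin.valEmbedding_apply, Equiv.coe_toEmbedding] at hspread
    have hinv := hav.invStat_add_sum_lrm
    omega
  · rw [hrgf.maxLetterL_eq_card_firstPositions, ← hfirst, card_map, lrmStat]

/-- if a 321-avoiding permutation `π` corresponds to a noncrossing RGF `w`
under the ballot-pair encoding (positions/values of LRM matching firsts/lasts of `w`),
then `spread(w) = inv(π)` and `block(w) = LRM(π)`. -/
theorem spread_block_eq_inv_lrm (n : ℕ) (w : List ℕ) (hlen : w.length = n)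
    (hrgf : IsRGFL w) (hnc : Avoids1212L w) (π : Equiv.Perm (Fin n)) (hav : Av321 π)
    (hpos : posOf π = firstsOf w) (hval : valOf π = lastsOf w) :
    spreadL w = invStat π ∧ maxLetterL w = lrmStat π :=
  spread_block_eq_inv_lrm_general n w hlen hrgf π hav hpos hval

end
end
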